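/- arXiv:1010.0425 — 3 statements merged into one kernel-verified Lean document; each statement's English description precedes it below -/
import Mathlib

section
/- Let A, B be self-adjoint operators on a finite-dimensional complex Hilbert space with C := B − A. Then ln Tr e^{B} − ln Tr e^{A} ≤ Tr(C e^{B}) / Tr e^{B}. -/
/-!
Diagonalize `B = U diag(λ) U*` and let `aᵢ` be the diagonal entries of `U* A U`. Each `aᵢ` is a
convex combination of the eigenvalues of `A`, with weights `|(V* U)ⱼᵢ|²` where `V` diagonalizes
`A`; Jensen's inequality for `exp` then gives Peierls' inequality `∑ᵢ e^{aᵢ} ≤ Tr e^A`. What is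
left is the commutative inequality
`log ∑ e^{λᵢ} - log ∑ e^{aᵢ} ≤ ∑ (λᵢ - aᵢ) e^{λᵢ} / ∑ e^{λᵢ}`,
which is Jensen's inequality for `exp` with the Gibbs weights `e^{λᵢ} / ∑ e^{λ}`.
-/

open Matrix Unitary

lemma Real.log_sum_exp_sub_log_sum_exp_le {ι : Type*} [Fintype ι] [Nonempty ι] (l a : ι → ℝ) :
    Real.log (∑ i, Real.exp (l i)) - Real.log (∑ i, Real.exp (a i)) ≤
      (∑ i, (l i - a i) * Real.exp (l i)) / ∑ i, Real.exp (l i) := by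
  set Z := ∑ i, Real.exp (l i)
  have hZ : 0 < Z := Finset.sum_pos (fun i _ => Real.exp_pos _) Finset.univ_nonempty
  have hw : ∑ i, Real.exp (l i) / Z = 1 := by rw [← Finset.sum_div, div_self hZ.ne']
  have jensen : Real.exp (∑ i, Real.exp (l i) / Z * (a i - l i)) ≤
      ∑ i, Real.exp (l i) / Z * Real.exp (a i - l i) :=
    convexOn_exp.map_sum_le (fun i _ => by positivity) hw (fun i _ => Set.mem_univ _)
  have hrhs : ∑ i, Real.exp (l i) / Z * Real.exp (a i - l i) = (∑ i, Real.exp (a i)) / Z := by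
    rw [Finset.sum_div]
    refine Finset.sum_congr rfl fun i _ => ?_
    rw [Real.exp_sub]
    field_simp
  have hlhs : ∑ i, Real.exp (l i) / Z * (a i - l i) =
      -((∑ i, (l i - a i) * Real.exp (l i)) / Z) := by
    rw [Finset.sum_div, ← Finset.sum_neg_distrib]
    refine Finset.sum_congr rfl fun i _ => ?_
    ring
  rw [hlhs, hrhs, ← Real.le_log_iff_exp_le (by positivity),
    Real.log_div (by positivity) hZ.ne'] at jensen
  linarith

namespace Matrix

variable {ι : Type*} [Fintype ι] [DecidableEq ι]

section CommRing

variable {R : Type*} [CommRing R] [StarRing R]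

lemma trace_conjStarAlgAut (U : unitaryGroup ι R) (M : Matrix ι ι R) :
    (conjStarAlgAut R _ U M).trace = M.trace := by
  rw [conjStarAlgAut_apply, trace_mul_cycle, coe_star_mul_self, one_mul]

lemma trace_mul_conjStarAlgAut_diagonal (U : unitaryGroup ι R) (M : Matrix ι ι R) (d : ι → R) :
    (M * conjStarAlgAut R _ U (diagonal d)).trace =
      ∑ i, conjStarAlgAut R _ (star U) M i i * d i := by
  rw [← trace_conjStarAlgAut (star U), map_mul, ← conjStarAlgAut_mul_apply, star_mul_self,
    map_one, StarAlgEquiv.one_apply]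
  simp [trace, mul_diagonal]

lemma conjStarAlgAut_star_diagonal_apply_self (W : unitaryGroup ι R) (d : ι → R) (i : ι) :
    conjStarAlgAut R _ (star W) (diagonal d) i i = ∑ j, star (W j i) * W j i * d j := by
  simp only [conjStarAlgAut_star_apply, mul_apply, diagonal_apply, star_apply, mul_ite, mul_zero,
    Finset.sum_ite_eq', Finset.mem_univ, if_true]
  exact Finset.sum_congr rfl fun j _ => by ring

end CommRing

variable {𝕜 : Type*} [RCLike 𝕜]

lemma sum_norm_sq_unitaryGroup_apply (W : unitaryGroup ι 𝕜) (i : ι) :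
    ∑ j, ‖(W : Matrix ι ι 𝕜) j i‖ ^ 2 = 1 := by
  have h := congr_fun₂ (coe_star_mul_self W) i i
  simp only [mul_apply, star_apply, RCLike.star_def, RCLike.conj_mul, one_apply_eq] at h
  exact_mod_cast h

lemma re_conjStarAlgAut_star_diagonal_apply_self (W : unitaryGroup ι 𝕜) (d : ι → ℝ) (i : ι) :
    RCLike.re (conjStarAlgAut 𝕜 _ (star W) (diagonal (RCLike.ofReal ∘ d)) i i) =
      ∑ j, ‖(W : Matrix ι ι 𝕜) j i‖ ^ 2 * d j := by
  simp [conjStarAlgAut_star_diagonal_apply_self, RCLike.star_def, RCLike.conj_mul]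

lemma exp_conjStarAlgAut (U : unitaryGroup ι 𝕜) (M : Matrix ι ι 𝕜) :
    NormedSpace.exp (conjStarAlgAut 𝕜 _ U M) = conjStarAlgAut 𝕜 _ U (NormedSpace.exp M) := by
  have hU : (star U : Matrix ι ι 𝕜) = (U : Matrix ι ι 𝕜)⁻¹ :=
    (inv_eq_right_inv (coe_mul_star_self U)).symm
  simp only [conjStarAlgAut_apply, hU]
  exact exp_conj _ _ (Unitary.toUnits U).isUnit

lemma IsHermitian.exp_eq {A : Matrix ι ι 𝕜} (hA : A.IsHermitian) :
    NormedSpace.exp A = conjStarAlgAut 𝕜 _ hA.eigenvectorUnitary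
      (diagonal (RCLike.ofReal ∘ Real.exp ∘ hA.eigenvalues)) := by
  conv_lhs => rw [hA.spectral_theorem]
  rw [exp_conjStarAlgAut, exp_diagonal]
  congr
  ext i
  simp [Real.exp_eq_exp_ℝ, ← NormedSpace.algebraMap_exp_comm]

lemma IsHermitian.sum_exp_diag_conj_le_trace_exp {A : Matrix ι ι 𝕜} (hA : A.IsHermitian)
    (U : unitaryGroup ι 𝕜) :
    ∑ i, Real.exp (RCLike.re (conjStarAlgAut 𝕜 _ (star U) A i i)) ≤
      RCLike.re (NormedSpace.exp A).trace := by
  set V := hA.eigenvectorUnitary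
  set W := star V * U
  have hconj (D : Matrix ι ι 𝕜) :
      conjStarAlgAut 𝕜 _ (star U) (conjStarAlgAut 𝕜 _ V D) = conjStarAlgAut 𝕜 _ (star W) D := by
    rw [← conjStarAlgAut_mul_apply, star_mul, star_star]
  have hdiag (i : ι) : RCLike.re (conjStarAlgAut 𝕜 _ (star U) A i i) =
      ∑ j, ‖(W : Matrix ι ι 𝕜) j i‖ ^ 2 * hA.eigenvalues j := by
    conv_lhs => rw [hA.spectral_theorem]
    rw [hconj, re_conjStarAlgAut_star_diagonal_apply_self]
  have htrace : RCLike.re (NormedSpace.exp A).trace =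
      ∑ i, ∑ j, ‖(W : Matrix ι ι 𝕜) j i‖ ^ 2 * Real.exp (hA.eigenvalues j) := by
    rw [← trace_conjStarAlgAut (star U), hA.exp_eq, hconj, trace, map_sum]
    exact Finset.sum_congr rfl fun i _ => re_conjStarAlgAut_star_diagonal_apply_self W _ i
  rw [htrace]
  gcongr with i
  rw [hdiag]
  exact convexOn_exp.map_sum_le (fun j _ => by positivity) (sum_norm_sq_unitaryGroup_apply W i)
    (fun j _ => Set.mem_univ _)

end Matrix

/-- Peierls–Bogoliubov convexity inequality: for self-adjoint operators `A`, `B` on a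
finite-dimensional complex Hilbert space with `C = B - A`,
`ln Tr e^B − ln Tr e^A ≤ Tr(C e^B) / Tr e^B`. -/
theorem stmt5 (n : ℕ) (A B : Matrix (Fin n) (Fin n) ℂ)
    (hA : A.IsHermitian) (hB : B.IsHermitian) (C : Matrix (Fin n) (Fin n) ℂ)
    (hC : C = B - A) :
    Real.log ((NormedSpace.exp B).trace).re - Real.log ((NormedSpace.exp A).trace).re ≤
      ((C * NormedSpace.exp B).trace).re / ((NormedSpace.exp B).trace).re := by
  rcases isEmpty_or_nonempty (Fin n) with hn | hn
  · simp [trace]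
  set U := hB.eigenvectorUnitary
  set l := hB.eigenvalues
  set a := fun i => (conjStarAlgAut ℂ _ (star U) A i i).re
  have htrB : (NormedSpace.exp B).trace.re = ∑ i, Real.exp (l i) := by
    rw [hB.exp_eq, trace_conjStarAlgAut]
    simp [trace, Complex.exp_ofReal_re, l]
  have htrC : ((C * NormedSpace.exp B).trace).re = ∑ i, (l i - a i) * Real.exp (l i) := by
    rw [hB.exp_eq, trace_mul_conjStarAlgAut_diagonal, hC, map_sub,
      hB.conjStarAlgAut_star_eigenvectorUnitary]
    simp [Complex.re_sum, Complex.exp_ofReal_re, a, l, U]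
  have hPeierls : ∑ i, Real.exp (a i) ≤ (NormedSpace.exp A).trace.re :=
    hA.sum_exp_diag_conj_le_trace_exp U
  rw [htrB, htrC]
  calc _ ≤ Real.log (∑ i, Real.exp (l i)) - Real.log (∑ i, Real.exp (a i)) := by gcongr
    _ ≤ _ := Real.log_sum_exp_sub_log_sum_exp_le l a
end

section
/- Let A be a self-adjoint operator on a finite-dimensional complex Hilbert space H, and let P be an orthogonal projection with range K. Then Tr_K e^{P A P|_K} ≤ Tr_H e^{A}. -/
/-!
Diagonalize `A = U diag(μ) Uᴴ` and `Vᴴ A V = S diag(ν) Sᴴ`. The matrix `M = Uᴴ V S` is again an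
isometry and `ν i = ∑ l, |M l i|² μ l`. In the nonnegative weight matrix `|M l i|²` each column
sums to `1` because `Mᴴ M = 1`, and each row sums to at most `1` because `M Mᴴ` is an orthogonal
projection. Jensen's inequality for `exp` in every column, followed by the row bound,
gives `∑ i, exp (ν i) ≤ ∑ l, exp (μ l)`.
-/

open Matrix

theorem ConvexOn.sum_map_sum_mul_le_of_substochastic {ι κ : Type*} [Fintype ι] [Fintype κ]
    {s : Set ℝ} {f : ℝ → ℝ} (hf : ConvexOn ℝ s f) {x : ι → ℝ} (hxs : ∀ l, x l ∈ s)
    (hfx : ∀ l, 0 ≤ f (x l)) {p : ι → κ → ℝ} (hp : ∀ l i, 0 ≤ p l i)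
    (hcol : ∀ i, ∑ l, p l i = 1) (hrow : ∀ l, ∑ i, p l i ≤ 1) :
    ∑ i, f (∑ l, p l i * x l) ≤ ∑ l, f (x l) :=
  calc ∑ i, f (∑ l, p l i * x l)
      ≤ ∑ i, ∑ l, p l i * f (x l) :=
        Finset.sum_le_sum fun i _ =>
          hf.map_sum_le (fun l _ => hp l i) (hcol i) (fun l _ => hxs l)
    _ = ∑ l, (∑ i, p l i) * f (x l) := by
        rw [Finset.sum_comm]
        simp only [Finset.sum_mul]
    _ ≤ ∑ l, f (x l) :=
        Finset.sum_le_sum fun l _ => mul_le_of_le_one_left (hfx l) (hrow l)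

namespace Matrix

variable {𝕜 : Type*} [RCLike 𝕜] {m n : Type*}

theorem IsHermitian.re_trace_exp [Fintype n] [DecidableEq n] {A : Matrix n n 𝕜}
    (hA : A.IsHermitian) :
    RCLike.re (NormedSpace.exp A).trace = ∑ i, Real.exp (hA.eigenvalues i) := by
  set U : Matrix n n 𝕜 := (hA.eigenvectorUnitary : Matrix n n 𝕜)
  have hU : star U * U = 1 := Unitary.star_mul_self_of_mem hA.eigenvectorUnitary.prop
  have hU' : U * star U = 1 := Unitary.mul_star_self_of_mem hA.eigenvectorUnitary.prop
  have hUinv : U⁻¹ = star U := inv_eq_left_inv hU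
  have hexp : NormedSpace.exp A =
      U * NormedSpace.exp (diagonal (RCLike.ofReal ∘ hA.eigenvalues)) * U⁻¹ := by
    rw [← exp_conj U _ (.of_mul_eq_one _ hU'), hUinv]
    exact congrArg _ hA.spectral_theorem
  rw [hexp, trace_mul_cycle, hUinv, hU, one_mul, exp_diagonal, trace_diagonal, map_sum]
  refine Finset.sum_congr rfl fun i _ => ?_
  rw [Pi.coe_exp, Function.comp_apply, ← RCLike.algebraMap_eq_ofReal,
    ← NormedSpace.algebraMap_exp_comm, RCLike.algebraMap_eq_ofReal, RCLike.ofReal_re,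
    Real.exp_eq_exp_ℝ]

theorem conjTranspose_mul_diagonal_mul_apply_self [Fintype m] [DecidableEq m]
    (M : Matrix m n 𝕜) (d : m → 𝕜) (i : n) :
    (Mᴴ * diagonal d * M) i i = ∑ l, ((‖M l i‖ ^ 2 : ℝ) : 𝕜) * d l := by
  rw [mul_apply]
  simp only [mul_diagonal, conjTranspose_apply, RCLike.star_def]
  refine Finset.sum_congr rfl fun l _ => ?_
  rw [RCLike.ofReal_pow, ← RCLike.conj_mul]
  ring

theorem conjTranspose_mul_self_apply_self [Fintype m] (M : Matrix m n 𝕜) (i : n) :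
    (Mᴴ * M) i i = ((∑ l, ‖M l i‖ ^ 2 : ℝ) : 𝕜) := by
  simp only [mul_apply, conjTranspose_apply, RCLike.star_def, RCLike.conj_mul, RCLike.ofReal_sum,
    RCLike.ofReal_pow]

theorem mul_conjTranspose_apply_self [Fintype n] (M : Matrix m n 𝕜) (l : m) :
    (M * Mᴴ) l l = ((∑ i, ‖M l i‖ ^ 2 : ℝ) : 𝕜) := by
  simp only [mul_apply, conjTranspose_apply, RCLike.star_def, RCLike.mul_conj, RCLike.ofReal_sum,
    RCLike.ofReal_pow]

theorem sum_norm_sq_apply_left_eq_one [Fintype m] [DecidableEq n] {M : Matrix m n 𝕜}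
    (hM : Mᴴ * M = 1) (i : n) : ∑ l, ‖M l i‖ ^ 2 = 1 := by
  have h := conjTranspose_mul_self_apply_self M i
  rw [hM, one_apply_eq] at h
  exact_mod_cast h.symm

theorem sum_norm_sq_apply_right_le_one [Fintype m] [Fintype n] [DecidableEq n]
    {M : Matrix m n 𝕜} (hM : Mᴴ * M = 1) (l : m) : ∑ i, ‖M l i‖ ^ 2 ≤ 1 := by
  -- `P = M Mᴴ` is a projection, so `x = P l l = (P Pᴴ) l l = ∑ k, ‖P l k‖ ^ 2 ≥ x ^ 2`.
  set P := M * Mᴴ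
  have hPP : P * Pᴴ = P := by
    rw [conjTranspose_mul, conjTranspose_conjTranspose, Matrix.mul_assoc, ← Matrix.mul_assoc Mᴴ,
      hM, Matrix.one_mul]
  set x := ∑ i, ‖M l i‖ ^ 2
  have hPll : P l l = (x : 𝕜) := mul_conjTranspose_apply_self M l
  have hx : x = ∑ k, ‖P l k‖ ^ 2 := by
    have := mul_conjTranspose_apply_self P l
    rw [hPP, hPll] at this
    exact_mod_cast this
  have hsq : x ^ 2 ≤ x := by
    calc x ^ 2 = ‖P l l‖ ^ 2 := by rw [hPll, RCLike.norm_ofReal, sq_abs]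
      _ ≤ x := hx ▸ Finset.single_le_sum (fun k _ => sq_nonneg ‖P l k‖) (Finset.mem_univ l)
  nlinarith [Finset.sum_nonneg fun i (_ : i ∈ Finset.univ) => sq_nonneg ‖M l i‖]

theorem IsHermitian.exists_isometry_eigenvalues_conjTranspose_mul_mul [Fintype m] [DecidableEq m]
    [Fintype n] [DecidableEq n] {A : Matrix n n 𝕜} (hA : A.IsHermitian) {V : Matrix n m 𝕜}
    (hV : Vᴴ * V = 1) :
    ∃ M : Matrix n m 𝕜, Mᴴ * M = 1 ∧ ∀ i, (isHermitian_conjTranspose_mul_mul V hA).eigenvalues i =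
      ∑ l, ‖M l i‖ ^ 2 * hA.eigenvalues l := by
  have hB := isHermitian_conjTranspose_mul_mul V hA
  set U : Matrix n n 𝕜 := (hA.eigenvectorUnitary : Matrix n n 𝕜)
  set S : Matrix m m 𝕜 := (hB.eigenvectorUnitary : Matrix m m 𝕜)
  set D : Matrix n n 𝕜 := diagonal (RCLike.ofReal ∘ hA.eigenvalues)
  have hU : U * star U = 1 := Unitary.mul_star_self_of_mem hA.eigenvectorUnitary.prop
  have hS : star S * S = 1 := Unitary.star_mul_self_of_mem hB.eigenvectorUnitary.prop
  have hA_diag : U * D * star U = A := hA.spectral_theorem.symm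
  have hB_diag : star S * (Vᴴ * A * V) * S = diagonal (RCLike.ofReal ∘ hB.eigenvalues) := by
    rw [← hB.conjStarAlgAut_star_eigenvectorUnitary, Unitary.conjStarAlgAut_apply,
      Unitary.coe_star, star_star]
  set M : Matrix n m 𝕜 := star U * V * S
  have hMH : Mᴴ = star S * Vᴴ * U := by
    simp only [M, conjTranspose_mul, star_eq_conjTranspose, conjTranspose_conjTranspose,
      Matrix.mul_assoc]
  have hM_sandwich (X : Matrix n n 𝕜) : Mᴴ * X * M = star S * (Vᴴ * (U * X * star U) * V) * S := by
    rw [hMH]; simp only [M, Matrix.mul_assoc]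
  refine ⟨M, ?_, fun i => ?_⟩
  · simpa [hU, hV, hS] using hM_sandwich 1
  · have h := conjTranspose_mul_diagonal_mul_apply_self M (RCLike.ofReal ∘ hA.eigenvalues) i
    rw [hM_sandwich, hA_diag, hB_diag, diagonal_apply_eq] at h
    simp only [Function.comp_apply, ← RCLike.ofReal_mul, ← RCLike.ofReal_sum] at h
    exact_mod_cast h

end Matrix

/-- Restricting a self-adjoint operator to a subspace decreases the partition function:
if `V : K → H` is an isometry (`Vᴴ V = 1`), so that `P = V Vᴴ` is the orthogonal projection
onto its range, then `Tr_K e^{Vᴴ A V} ≤ Tr_H e^A`. -/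
theorem stmt6 (n m : ℕ) (A : Matrix (Fin n) (Fin n) ℂ) (hA : A.IsHermitian)
    (V : Matrix (Fin n) (Fin m) ℂ) (hV : Vᴴ * V = 1) :
    ((NormedSpace.exp (Vᴴ * A * V)).trace).re ≤ ((NormedSpace.exp A).trace).re := by
  obtain ⟨M, hM, hB_eigenvalues⟩ := hA.exists_isometry_eigenvalues_conjTranspose_mul_mul hV
  calc ((NormedSpace.exp (Vᴴ * A * V)).trace).re
      = ∑ i, Real.exp ((isHermitian_conjTranspose_mul_mul V hA).eigenvalues i) :=
        (isHermitian_conjTranspose_mul_mul V hA).re_trace_exp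
    _ = ∑ i, Real.exp (∑ l, ‖M l i‖ ^ 2 * hA.eigenvalues l) := by simp only [hB_eigenvalues]
    _ ≤ ∑ l, Real.exp (hA.eigenvalues l) :=
        convexOn_exp.sum_map_sum_mul_le_of_substochastic (fun _ => Set.mem_univ _)
          (fun _ => (Real.exp_pos _).le) (fun _ _ => sq_nonneg _)
          (sum_norm_sq_apply_left_eq_one hM) (sum_norm_sq_apply_right_le_one hM)
    _ = ((NormedSpace.exp A).trace).re := hA.re_trace_exp.symm
end

section
/- Consider the function ρ(μ, η) := I(μ) + |η|²/μ² for μ < 0, η ∈ ℂ, where I : (−∞, 0) → ℝ is continuous, strictly increasing, with ρ_c := sup_{μ<0} I(μ) < ∞ and I extends continuously to I(0) = ρ_c. Fix ρ̄ > ρ_c. For each η ≠ 0 let μ(η) < 0 solve ρ̄ = I(μ(η)) + |η|²/μ(η)². Then as |η| → 0, μ(η) → 0 and |η|²/μ(η)² → ρ̄ − ρ_c. -/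
open Filter Topology

/-!
Since `I(μ) ≤ ρ_c`, the equation gives `|η|²/μ(η)² = ρ̄ - I(μ(η)) ≥ ρ̄ - ρ_c > 0`, hence
`|μ(η)| ≤ |η| / √(ρ̄ - ρ_c) → 0`. Then `|η|²/μ(η)² = ρ̄ - I(μ(η)) → ρ̄ - I(0)` by continuity of `I`
at `0` from the left.
-/

lemma mul_sq_le_of_eq_add_div_sq {ρ i i₀ m x : ℝ} (hm : m ≠ 0) (hi : i ≤ i₀)
    (h : ρ = i + x / m ^ 2) : (ρ - i₀) * m ^ 2 ≤ x := by
  have hx : x = (ρ - i) * m ^ 2 := by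
    rw [h]
    field_simp
    ring
  rw [hx]
  exact mul_le_mul_of_nonneg_right (by linarith) (sq_nonneg m)

lemma abs_le_div_sqrt_of_mul_sq_le {c m a : ℝ} (hc : 0 < c) (h : c * m ^ 2 ≤ a ^ 2) :
    |m| ≤ |a| / √c := by
  rw [le_div_iff₀ (Real.sqrt_pos.2 hc), ← abs_of_pos (Real.sqrt_pos.2 hc), ← abs_mul]
  refine sq_le_sq.mp ?_
  rw [mul_pow, Real.sq_sqrt hc.le]
  linarith

theorem stmt17_general (I : ℝ → ℝ)
    (hcont : ContinuousOn I (Set.Iic 0))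
    (hsup : ∀ m < (0 : ℝ), I m ≤ I 0)
    (ρbar : ℝ) (hρ : I 0 < ρbar)
    (μ : ℂ → ℝ)
    (hμneg : ∀ η : ℂ, η ≠ 0 → μ η < 0)
    (hμeq : ∀ η : ℂ, η ≠ 0 → ρbar = I (μ η) + ‖η‖ ^ 2 / (μ η) ^ 2) :
    Tendsto μ (nhdsWithin 0 {η : ℂ | η ≠ 0}) (nhds 0) ∧
    Tendsto (fun η : ℂ => ‖η‖ ^ 2 / (μ η) ^ 2)
      (nhdsWithin 0 {η : ℂ | η ≠ 0}) (nhds (ρbar - I 0)) := by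
  have hgap : 0 < ρbar - I 0 := sub_pos.mpr hρ
  have hμ_bound : ∀ η : ℂ, η ≠ 0 → |μ η| ≤ ‖η‖ / √(ρbar - I 0) := fun η hη => by
    simpa using abs_le_div_sqrt_of_mul_sq_le hgap <| mul_sq_le_of_eq_add_div_sq
      (hμneg η hη).ne (hsup _ (hμneg η hη)) (hμeq η hη)
  have hμ_lim : Tendsto μ (𝓝[≠] 0) (𝓝 0) := by
    have hη_lim : Tendsto (fun η : ℂ => ‖η‖ / √(ρbar - I 0)) (𝓝[≠] 0) (𝓝 0) :=
      tendsto_nhdsWithin_of_tendsto_nhds <| by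
        simpa using (continuous_norm.div_const _).tendsto (0 : ℂ)
    refine squeeze_zero_norm' ?_ hη_lim
    filter_upwards [self_mem_nhdsWithin] with η hη using hμ_bound η hη
  have hμ_lim_left : Tendsto μ (𝓝[≠] 0) (𝓝[≤] 0) :=
    tendsto_nhdsWithin_of_tendsto_nhds_of_eventually_within _ hμ_lim
      (eventually_nhdsWithin_of_forall fun η hη => (hμneg η hη).le)
  refine ⟨hμ_lim, ?_⟩
  refine (tendsto_const_nhds.sub ((hcont 0 Set.self_mem_Iic).tendsto.comp hμ_lim_left)).congr' ?_
  filter_upwards [self_mem_nhdsWithin] with η hη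
  rw [Function.comp_apply, hμeq η hη]
  ring

/-- Quasi-average condensate equation: let `I` be continuous on `(−∞, 0]`, strictly
increasing on `(−∞, 0)`, with finite critical density `ρ_c = I(0) = sup_{μ<0} I(μ)`.
Fix `ρ̄ > ρ_c` and for each `η ≠ 0` let `μ(η) < 0` solve `ρ̄ = I(μ(η)) + |η|²/μ(η)²`.
Then as `|η| → 0`, `μ(η) → 0` and `|η|²/μ(η)² → ρ̄ − ρ_c`. -/
theorem stmt17 (I : ℝ → ℝ)
    (hcont : ContinuousOn I (Set.Iic 0))
    (hmono : StrictMonoOn I (Set.Iio 0))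
    (hsup : ∀ m < (0 : ℝ), I m ≤ I 0)
    (ρbar : ℝ) (hρ : I 0 < ρbar)
    (μ : ℂ → ℝ)
    (hμneg : ∀ η : ℂ, η ≠ 0 → μ η < 0)
    (hμeq : ∀ η : ℂ, η ≠ 0 → ρbar = I (μ η) + ‖η‖ ^ 2 / (μ η) ^ 2) :
    Tendsto μ (nhdsWithin 0 {η : ℂ | η ≠ 0}) (nhds 0) ∧
    Tendsto (fun η : ℂ => ‖η‖ ^ 2 / (μ η) ^ 2)
      (nhdsWithin 0 {η : ℂ | η ≠ 0}) (nhds (ρbar - I 0)) :=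
  stmt17_general I hcont hsup ρbar hρ μ hμneg hμeq
end
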